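/- Every saturated convex Θ^2-drawing of a graph G on n ≥ 3 vertices has exactly 3n − 6 edges. -/

import Mathlib

/-- Points of the plane. -/
abbrev Pt : Type := ℝ × ℝ

/-- Two straight-line segments cross if some point lies in the interior
(open segment) of both. -/
def SegCross (a b c d : Pt) : Prop :=
  ∃ x : Pt, x ∈ openSegment ℝ a b ∧ x ∈ openSegment ℝ c d

/-- Two edges (unordered pairs of vertices) cross in the drawing `p`. -/
def EdgeCross {V : Type} (p : V → Pt) (e f : Sym2 V) : Prop :=
  ∃ u v x y : V, e = s(u, v) ∧ f = s(x, y) ∧ SegCross (p u) (p v) (p x) (p y)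

/-- The drawing `p` is injective and no three vertex points are collinear. -/
def GenPos {V : Type} (p : V → Pt) : Prop :=
  Function.Injective p ∧
    ∀ u v w : V, u ≠ v → u ≠ w → v ≠ w → ¬ Collinear ℝ ({p u, p v, p w} : Set Pt)

/-- The vertex points are in convex position: every vertex point is an extreme
point of the convex hull of all vertex points. -/
def ConvexPos {V : Type} (p : V → Pt) : Prop :=
  ∀ v : V, p v ∈ Set.extremePoints ℝ (convexHull ℝ (Set.range p))

/-- A `k`-coloring of the edges of `G` is crossing-free if no two distinct
edges of the same color cross. -/
def CrossingFree {V : Type} {k : ℕ} (G : SimpleGraph V) (p : V → Pt)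
    (φ : Sym2 V → Fin k) : Prop :=
  ∀ e ∈ G.edgeSet, ∀ f ∈ G.edgeSet, e ≠ f → φ e = φ f → ¬ EdgeCross p e f

open scoped Classical

/-- A precolored drawing `(G, p, φ)` is saturated: for every pair of distinct
non-adjacent vertices and every color `c`, assigning color `c` to the new edge
`uv` yields a coloring that is not crossing-free. -/
def PrecoloredSaturated {V : Type} {k : ℕ} (G : SimpleGraph V) (p : V → Pt)
    (φ : Sym2 V → Fin k) : Prop :=
  ∀ u v : V, u ≠ v → ¬ G.Adj u v → ∀ c : Fin k,
    ¬ CrossingFree (G ⊔ SimpleGraph.fromEdgeSet {s(u, v)}) p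
      (fun e => if e = s(u, v) then c else φ e)

/-- A (non-precolored) drawing of `G` is saturated for thickness `k`: for every
pair of distinct non-adjacent vertices `u, v`, the drawing of `G + uv` admits
no crossing-free `k`-coloring. -/
def Saturated {V : Type} (k : ℕ) (G : SimpleGraph V) (p : V → Pt) : Prop :=
  ∀ u v : V, u ≠ v → ¬ G.Adj u v →
    ∀ φ : Sym2 V → Fin k,
      ¬ CrossingFree (G ⊔ SimpleGraph.fromEdgeSet {s(u, v)}) p φ

/-- Twice the signed area of the triangle `a b c`. -/
def det2 (a b c : Pt) : ℝ :=
  (b.1 - a.1) * (c.2 - a.2) - (b.2 - a.2) * (c.1 - a.1)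

/-- An edge is an outer edge if its endpoints are consecutive on the boundary
of the convex hull of the vertex points, i.e. all other vertex points lie
strictly on one side of the line through its endpoints. -/
def IsOuterEdge {V : Type} (p : V → Pt) (e : Sym2 V) : Prop :=
  ∃ u v : V, e = s(u, v) ∧
    ((∀ w : V, w ≠ u → w ≠ v → 0 < det2 (p u) (p v) (p w)) ∨
     (∀ w : V, w ≠ u → w ≠ v → det2 (p u) (p v) (p w) < 0))

/-!
Label the points by their position in counterclockwise order around the convex hull. Two
segments then cross exactly when their labels interleave, so everything reduces to chords of a
convex polygon. The sides of the polygon cross nothing, so saturation puts all `n` of them into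
`G`. Among the crossing-free 2-colourings choose one with as many diagonals of colour 0 as
possible: saturation and this maximality make the colour-0 diagonals a triangulation, hence
`n - 3` of them. The colour-1 diagonals form a triangulation too: otherwise some diagonal `e`
crossing no colour-1 edge is a colour-0 edge, and recolouring `e` with colour 1 while adding,
in colour 0, the diagonal obtained by flipping `e` in the colour-0 triangulation contradicts
saturation. So `G` has `n + 2 (n - 3) = 3n - 6` edges.
-/

lemma det2_rotate (a b c : Pt) : det2 a b c = det2 b c a := by unfold det2; ring

lemma det2_swap (a b c : Pt) : det2 a c b = -det2 a b c := by unfold det2; ring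

lemma det2_smul_add_smul (a b c d : Pt) {s t : ℝ} (h : s + t = 1) :
    det2 a b (s • c + t • d) = s * det2 a b c + t * det2 a b d := by
  obtain rfl : t = 1 - s := by linarith
  simp only [det2, Prod.fst_add, Prod.snd_add, Prod.smul_fst, Prod.smul_snd, smul_eq_mul]
  ring

lemma det2_eq_zero_of_mem_openSegment {a b x : Pt} (hx : x ∈ openSegment ℝ a b) :
    det2 a b x = 0 := by
  obtain ⟨s, t, -, -, hst, rfl⟩ := hx
  rw [det2_smul_add_smul a b a b hst]
  unfold det2
  ring

lemma collinear_of_det2_eq_zero {a b c : Pt} (h : det2 a b c = 0) :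
    Collinear ℝ ({a, b, c} : Set Pt) := by
  by_cases hab : a = b
  · subst hab
    simpa using collinear_pair ℝ a c
  have hc : ∃ t : ℝ, c = AffineMap.lineMap a b t := by
    unfold det2 at h
    simp only [AffineMap.lineMap_apply, vsub_eq_sub, vadd_eq_add, Prod.ext_iff, Prod.fst_add,
      Prod.snd_add, Prod.smul_fst, Prod.smul_snd, Prod.fst_sub, Prod.snd_sub, smul_eq_mul]
    by_cases h1 : b.1 - a.1 = 0
    · have h2 : b.2 - a.2 ≠ 0 := fun h2 =>
        hab (Prod.ext (sub_eq_zero.1 h1).symm (sub_eq_zero.1 h2).symm)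
      refine ⟨(c.2 - a.2) / (b.2 - a.2), ?_, ?_⟩ <;> field_simp
      · nlinarith
      · ring
    · refine ⟨(c.1 - a.1) / (b.1 - a.1), ?_, ?_⟩ <;> field_simp
      · ring
      · linear_combination h
  obtain ⟨t, rfl⟩ := hc
  have := collinear_insert_of_mem_affineSpan_pair (AffineMap.lineMap_mem_affineSpan_pair t a b)
  rwa [Set.insert_comm, Set.pair_comm] at this

lemma GenPos.det2_ne_zero {V : Type} {p : V → Pt} (hgen : GenPos p) {i j k : V}
    (hij : i ≠ j) (hik : i ≠ k) (hjk : j ≠ k) : det2 (p i) (p j) (p k) ≠ 0 :=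
  fun h => hgen.2 i j k hij hik hjk (collinear_of_det2_eq_zero h)

lemma sub_ne_zero_of_mul_neg {α β : ℝ} (h : α * β < 0) : α - β ≠ 0 := by
  rw [sub_ne_zero]
  rintro rfl
  nlinarith [mul_self_nonneg α]

lemma smul_add_smul_mem_openSegment_of_mul_neg {E : Type*} [AddCommGroup E] [Module ℝ E]
    {α β : ℝ} (h : α * β < 0) (a b : E) :
    (-β / (α - β)) • a + (α / (α - β)) • b ∈ openSegment ℝ a b := by
  have hne := sub_ne_zero_of_mul_neg h
  refine ⟨_, _, ?_, ?_, by field_simp; ring, rfl⟩ <;>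
    rcases mul_neg_iff.1 h with ⟨hα, hβ⟩ | ⟨hα, hβ⟩
  all_goals first
    | exact div_pos (by linarith) (by linarith)
    | exact div_pos_of_neg_of_neg (by linarith) (by linarith)

lemma SegCross.symm {a b c d : Pt} (h : SegCross a b c d) : SegCross c d a b :=
  let ⟨x, hab, hcd⟩ := h
  ⟨x, hcd, hab⟩

lemma segCross_comm_left {a b c d : Pt} : SegCross b a c d ↔ SegCross a b c d := by
  simp only [SegCross, openSegment_symm ℝ b a]

lemma segCross_comm_right {a b c d : Pt} : SegCross a b d c ↔ SegCross a b c d := by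
  simp only [SegCross, openSegment_symm ℝ d c]

lemma SegCross.det2_mul_neg {a b c d : Pt} (h : SegCross a b c d)
    (hne : det2 c d a ≠ 0 ∨ det2 c d b ≠ 0) : det2 c d a * det2 c d b < 0 := by
  obtain ⟨x, ⟨s, t, hs, ht, hst, rfl⟩, hcd⟩ := h
  have hx := det2_eq_zero_of_mem_openSegment hcd
  rw [det2_smul_add_smul c d a b hst] at hx
  have hb : det2 c d b ≠ 0 := by
    intro hb
    rw [hb, mul_zero, add_zero] at hx
    exact hne.elim (· ((mul_eq_zero.1 hx).resolve_left hs.ne')) (· hb)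
  have key : s * (det2 c d a * det2 c d b) = -(t * det2 c d b ^ 2) := by
    linear_combination det2 c d b * hx
  have : 0 < t * det2 c d b ^ 2 := by positivity
  nlinarith

lemma segCross_of_det2_mul_neg {a b c d : Pt} (h1 : det2 c d a * det2 c d b < 0)
    (h2 : det2 a b c * det2 a b d < 0) : SegCross a b c d := by
  refine ⟨_, smul_add_smul_mem_openSegment_of_mul_neg h1 a b, ?_⟩
  convert smul_add_smul_mem_openSegment_of_mul_neg h2 c d using 1
  have hf := sub_ne_zero_of_mul_neg h1
  have hg := sub_ne_zero_of_mul_neg h2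
  ext <;> simp only [Prod.smul_fst, Prod.smul_snd, Prod.fst_add, Prod.snd_add, smul_eq_mul] <;>
    field_simp <;> unfold det2 <;> ring

lemma segCross_iff_det2_mul_neg {a b c d : Pt} (hab : det2 c d a ≠ 0 ∨ det2 c d b ≠ 0)
    (hcd : det2 a b c ≠ 0 ∨ det2 a b d ≠ 0) :
    SegCross a b c d ↔ det2 c d a * det2 c d b < 0 ∧ det2 a b c * det2 a b d < 0 :=
  ⟨fun h => ⟨h.det2_mul_neg hab, h.symm.det2_mul_neg hcd⟩,
    fun h => segCross_of_det2_mul_neg h.1 h.2⟩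

lemma mem_convexHull_of_det2_nonneg {a b c q : Pt} (hD : 0 < det2 a b c)
    (ha : 0 ≤ det2 q b c) (hb : 0 ≤ det2 a q c) (hc : 0 ≤ det2 a b q) :
    q ∈ convexHull ℝ ({a, b, c} : Set Pt) := by
  have hsum : det2 q b c + det2 a q c + det2 a b q = det2 a b c := by unfold det2; ring
  have hmem := Finset.centerMass_mem_convexHull (R := ℝ) (s := ({a, b, c} : Set Pt))
    Finset.univ (w := ![det2 q b c, det2 a q c, det2 a b q]) (z := ![a, b, c])
    (by simp [Fin.forall_fin_succ, ha, hb, hc]) (by simpa [Fin.sum_univ_three, hsum] using hD)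
    (by simp [Fin.forall_fin_succ])
  convert hmem using 1
  simp only [Finset.centerMass, Fin.sum_univ_three, Matrix.cons_val_zero, Matrix.cons_val_one,
    Matrix.cons_val_two, Matrix.tail_cons, Matrix.head_cons, hsum]
  ext <;> simp only [Prod.smul_fst, Prod.smul_snd, Prod.fst_add, Prod.snd_add, smul_eq_mul] <;>
    field_simp <;> unfold det2 <;> ring

lemma mem_of_mem_extremePoints_convexHull {E : Type*} [AddCommGroup E] [Module ℝ E]
    {S T : Set E} {x : E} (hTS : T ⊆ S) (hx : x ∈ Set.extremePoints ℝ (convexHull ℝ S))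
    (hxT : x ∈ convexHull ℝ T) : x ∈ T :=
  extremePoints_convexHull_subset
    (inter_extremePoints_subset_extremePoints_of_subset (convexHull_mono hTS) ⟨hxT, hx⟩)

lemma det2_pos_of_mem_extremePoints {S : Set Pt} {o a b c : Pt} (ho : o ∈ S) (ha : a ∈ S)
    (hc : c ∈ S) (hb : b ∈ Set.extremePoints ℝ (convexHull ℝ S)) (hbo : b ≠ o) (hba : b ≠ a)
    (hbc : b ≠ c) (hoab : 0 < det2 o a b) (hobc : 0 < det2 o b c) (hoac : 0 < det2 o a c)
    (habc : det2 a b c ≠ 0) : 0 < det2 a b c := by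
  refine habc.lt_or_gt.resolve_left fun hneg => ?_
  have hmem : b ∈ convexHull ℝ ({o, a, c} : Set Pt) :=
    mem_convexHull_of_det2_nonneg hoac (by rw [det2_rotate, det2_swap]; linarith) hobc.le hoab.le
  have := mem_of_mem_extremePoints_convexHull (by simp [Set.insert_subset_iff, *]) hb hmem
  simp only [Set.mem_insert_iff, Set.mem_singleton_iff] at this
  tauto

lemma det2_pos_trans_of_le {o a b c : Pt} (ha : o.1 ≤ a.1) (hb : o.1 ≤ b.1) (hc : o.1 ≤ c.1)
    (hab : 0 < det2 o a b) (hbc : 0 < det2 o b c) (hac : det2 o a c ≠ 0) :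
    0 < det2 o a c := by
  have cramer : det2 o a b * (c.1 - o.1) + det2 o b c * (a.1 - o.1) =
      det2 o a c * (b.1 - o.1) := by unfold det2; ring
  refine hac.lt_or_gt.resolve_left fun hneg => hac ?_
  have t1 := mul_nonneg hab.le (sub_nonneg.2 hc)
  have t2 := mul_nonneg hbc.le (sub_nonneg.2 ha)
  have t3 := mul_nonpos_of_nonpos_of_nonneg hneg.le (sub_nonneg.2 hb)
  have hc' : c.1 = o.1 := by
    linarith [(mul_eq_zero.1 (by linarith : det2 o a b * (c.1 - o.1) = 0)).resolve_left hab.ne']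
  have ha' : a.1 = o.1 := by
    linarith [(mul_eq_zero.1 (by linarith : det2 o b c * (a.1 - o.1) = 0)).resolve_left hbc.ne']
  unfold det2
  rw [ha', hc']
  ring

lemma exists_rank {V : Type*} [Fintype V] (r : V → V → Prop) (hirr : ∀ i, ¬ r i i)
    (htrans : ∀ i j k, r i j → r j k → r i k) (htot : ∀ i j, i ≠ j → r i j ∨ r j i) :
    ∃ f : V → ℕ, Function.Injective f ∧ ∀ i j, f i < f j → r i j := by
  classical
  let f : V → ℕ := fun j => (Finset.univ.filter (r · j)).card
  have hmono (i j : V) (hij : r i j) : f i < f j := by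
    refine Finset.card_lt_card ⟨fun k hk => ?_, fun hsub => hirr i ?_⟩
    · simp only [Finset.mem_filter, Finset.mem_univ, true_and] at hk ⊢
      exact htrans k i j hk hij
    · simpa using hsub (by simpa using hij)
  refine ⟨f, fun i j hf => ?_, fun i j hf => ?_⟩
  · by_contra hij
    rcases htot i j hij with h | h
    exacts [(hmono i j h).ne hf, (hmono j i h).ne hf.symm]
  · have hij : i ≠ j := by rintro rfl; exact lt_irrefl _ hf
    exact (htot i j hij).resolve_right fun h => (hmono j i h).not_gt hf

structure IsCCWOrder {V : Type} (p : V → Pt) (ord : V → ℕ) : Prop where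
  injective : Function.Injective ord
  det2_pos : ∀ i j k, ord i < ord j → ord j < ord k → 0 < det2 (p i) (p j) (p k)

theorem exists_isCCWOrder {V : Type} [Fintype V] {p : V → Pt} (hgen : GenPos p)
    (hconv : ConvexPos p) : ∃ ord : V → ℕ, IsCCWOrder p ord := by
  rcases isEmpty_or_nonempty V with hV | hV
  · exact ⟨fun _ => 0, fun i => isEmptyElim i, fun i => isEmptyElim i⟩
  obtain ⟨v, -, hv⟩ := Finset.univ.exists_min_image (fun i => (p i).1) Finset.univ_nonempty
  -- sort the vertices by angle around the leftmost one
  let r : V → V → Prop := fun i j => j ≠ v ∧ (i = v ∨ i ≠ v ∧ 0 < det2 (p v) (p i) (p j))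
  have hirr (i : V) : ¬ r i i := by
    rintro ⟨hi, rfl | ⟨-, h⟩⟩
    · exact hi rfl
    · unfold det2 at h; linarith
  have hpos {i j : V} (h : r i j) (hi : i ≠ v) : 0 < det2 (p v) (p i) (p j) :=
    (h.2.resolve_left hi).2
  have htrans (i j k : V) (hij : r i j) (hjk : r j k) : r i k := by
    refine ⟨hjk.1, or_iff_not_imp_left.2 fun hi => ⟨hi, ?_⟩⟩
    have hvij := hpos hij hi
    have hvjk := hpos hjk hij.1
    have hik : i ≠ k := by rintro rfl; linarith [det2_swap (p v) (p i) (p j)]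
    exact det2_pos_trans_of_le (hv i (by simp)) (hv j (by simp)) (hv k (by simp)) hvij hvjk
      (hgen.det2_ne_zero (Ne.symm hi) (Ne.symm hjk.1) hik)
  have htot (i j : V) (hij : i ≠ j) : r i j ∨ r j i := by
    by_cases hi : i = v
    · exact .inl ⟨hi ▸ Ne.symm hij, .inl hi⟩
    by_cases hj : j = v
    · exact .inr ⟨hi, .inl hj⟩
    rcases (hgen.det2_ne_zero (Ne.symm hi) (Ne.symm hj) hij).lt_or_gt with h | h
    · exact .inr ⟨hi, .inr ⟨hj, by linarith [det2_swap (p v) (p i) (p j)]⟩⟩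
    · exact .inl ⟨hj, .inr ⟨hi, h⟩⟩
  obtain ⟨ord, hinj, hord⟩ := exists_rank r hirr htrans htot
  refine ⟨ord, hinj, fun i j k hij hjk => ?_⟩
  have rij := hord i j hij
  have rjk := hord j k hjk
  have hvjk := hpos rjk rij.1
  by_cases hi : i = v
  · exact hi ▸ hvjk
  have hij' : i ≠ j := fun h => hij.ne (congrArg ord h)
  have hjk' : j ≠ k := fun h => hjk.ne (congrArg ord h)
  have hik' : i ≠ k := fun h => (hij.trans hjk).ne (congrArg ord h)
  exact det2_pos_of_mem_extremePoints (Set.mem_range_self v) (Set.mem_range_self i)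
    (Set.mem_range_self k) (hconv j) (fun h => rij.1 (hgen.1 h)) (fun h => hij' (hgen.1 h).symm)
    (fun h => hjk' (hgen.1 h)) (hpos rij hi) hvjk (hpos (htrans i j k rij rjk) hi)
    (hgen.det2_ne_zero hij' hik' hjk')

namespace Polygon

/- A convex polygon is given by the labels `s` of its vertices, listed in cyclic order; a chord
is a pair `(a, b)` of labels with `a < b`. Its sides join cyclically consecutive labels, the
side `(min s, max s)` included. -/

def Cross (e f : ℕ × ℕ) : Prop :=
  e.1 < f.1 ∧ f.1 < e.2 ∧ e.2 < f.2 ∨ f.1 < e.1 ∧ e.1 < f.2 ∧ f.2 < e.2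

def IsChord (s : Finset ℕ) (e : ℕ × ℕ) : Prop := e.1 ∈ s ∧ e.2 ∈ s ∧ e.1 < e.2

def IsSide (s : Finset ℕ) (e : ℕ × ℕ) : Prop :=
  IsChord s e ∧ ((∀ z ∈ s, z ≤ e.1 ∨ e.2 ≤ z) ∨ ∀ z ∈ s, e.1 ≤ z ∧ z ≤ e.2)

def IsDiagonal (s : Finset ℕ) (e : ℕ × ℕ) : Prop :=
  IsChord s e ∧ (∃ z ∈ s, e.1 < z ∧ z < e.2) ∧ ∃ z ∈ s, z < e.1 ∨ e.2 < z

lemma cross_comm {e f : ℕ × ℕ} : Cross e f ↔ Cross f e := by unfold Cross; omega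

lemma not_cross_self (e : ℕ × ℕ) : ¬ Cross e e := by unfold Cross; omega

variable {s : Finset ℕ}

lemma IsChord.isSide_or_isDiagonal {e : ℕ × ℕ} (he : IsChord s e) :
    IsSide s e ∨ IsDiagonal s e := by
  by_cases hin : ∃ z ∈ s, e.1 < z ∧ z < e.2
  · by_cases hout : ∃ z ∈ s, z < e.1 ∨ e.2 < z
    · exact .inr ⟨he, hin, hout⟩
    · push Not at hout
      exact .inl ⟨he, .inr hout⟩
  · push Not at hin
    exact .inl ⟨he, .inl fun z hz => by have := hin z hz; omega⟩

lemma IsSide.not_isDiagonal {e : ℕ × ℕ} (he : IsSide s e) : ¬ IsDiagonal s e := by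
  rintro ⟨-, ⟨z, hz, hz1, hz2⟩, ⟨w, hw, hw'⟩⟩
  rcases he.2 with h | h
  · have := h z hz; omega
  · have := h w hw; omega

lemma IsSide.not_cross {e f : ℕ × ℕ} (he : IsSide s e) (hf : IsChord s f) : ¬ Cross e f := by
  obtain ⟨hf1, hf2, -⟩ := hf
  unfold Cross
  rcases he.2 with h | h
  · have := h _ hf1; have := h _ hf2; omega
  · have := h _ hf1; have := h _ hf2; omega

lemma exists_least_gt {x : ℕ} (h : ∃ z ∈ s, x < z) :
    ∃ y ∈ s, x < y ∧ ∀ z ∈ s, x < z → y ≤ z := by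
  obtain ⟨y, hy, hmin⟩ := (s.filter (x < ·)).exists_min_image id
    (let ⟨z, hz, hxz⟩ := h; ⟨z, Finset.mem_filter.2 ⟨hz, hxz⟩⟩)
  rw [Finset.mem_filter] at hy
  exact ⟨y, hy.1, hy.2, fun z hz hxz => hmin z (Finset.mem_filter.2 ⟨hz, hxz⟩)⟩

lemma isSide_of_least_gt {x y : ℕ} (hx : x ∈ s) (hy : y ∈ s) (hxy : x < y)
    (hmin : ∀ z ∈ s, x < z → y ≤ z) : IsSide s (x, y) :=
  ⟨⟨hx, hy, hxy⟩, .inl fun z hz => by have := hmin z hz; omega⟩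

lemma card_consecutive_add_one (hne : s.Nonempty) :
    ((s ×ˢ s).filter fun e => IsChord s e ∧ ∀ z ∈ s, z ≤ e.1 ∨ e.2 ≤ z).card + 1 = s.card := by
  have hM := s.max'_mem hne
  rw [← Finset.card_erase_add_one hM]
  congr 1
  refine Finset.card_nbij Prod.fst (fun e he => ?_) (fun e he f hf hef => ?_) (fun z hz => ?_)
  · obtain ⟨-, hc, -⟩ := Finset.mem_filter.1 he
    have := s.le_max' _ hc.2.1
    exact Finset.mem_erase.2 ⟨by have := hc.2.2; omega, hc.1⟩
  · obtain ⟨-, he, hen⟩ := Finset.mem_filter.1 he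
    obtain ⟨-, hf, hfn⟩ := Finset.mem_filter.1 hf
    have := hen _ hf.2.1; have := hfn _ he.2.1; have := he.2.2; have := hf.2.2
    exact Prod.ext hef (by omega)
  · obtain ⟨hzM, hz⟩ := Finset.mem_erase.1 hz
    obtain ⟨y, hy, hzy, hmin⟩ := exists_least_gt ⟨_, hM, lt_of_le_of_ne (s.le_max' z hz) hzM⟩
    exact ⟨(z, y), Finset.mem_filter.2 ⟨Finset.mem_product.2 ⟨hz, hy⟩, ⟨hz, hy, hzy⟩,
      fun w hw => by have := hmin w hw; omega⟩, rfl⟩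

lemma card_sides (hs : 3 ≤ s.card) : ((s ×ˢ s).filter (IsSide s)).card = s.card := by
  have hne : s.Nonempty := Finset.card_pos.1 (by omega)
  set m := s.min' hne
  set M := s.max' hne
  have hm : m ∈ s := s.min'_mem hne
  have hM : M ∈ s := s.max'_mem hne
  have hbounds (z : ℕ) (hz : z ∈ s) : m ≤ z ∧ z ≤ M := ⟨s.min'_le z hz, s.le_max' z hz⟩
  clear_value m M
  obtain ⟨z₀, hz₀, hmz₀, hz₀M⟩ : ∃ z ∈ s, m < z ∧ z < M := by
    obtain ⟨a, ha, b, hb, c, hc, hab, hac, hbc⟩ := Finset.two_lt_card.1 (by omega : 2 < s.card)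
    have := hbounds a ha; have := hbounds b hb; have := hbounds c hc
    rcases (by omega : m < a ∧ a < M ∨ m < b ∧ b < M ∨ m < c ∧ c < M) with h | h | h
    exacts [⟨a, ha, h⟩, ⟨b, hb, h⟩, ⟨c, hc, h⟩]
  set C := (s ×ˢ s).filter fun e => IsChord s e ∧ ∀ z ∈ s, z ≤ e.1 ∨ e.2 ≤ z
  have hsides : (s ×ˢ s).filter (IsSide s) = insert (m, M) C := by
    ext e
    simp only [Finset.mem_filter, Finset.mem_insert, C, Finset.mem_product, IsSide]
    constructor
    · rintro ⟨hes, hc, h | h⟩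
      · exact .inr ⟨hes, hc, h⟩
      · have := h m hm; have := h M hM; have := hbounds _ hc.1; have := hbounds _ hc.2.1
        exact .inl (Prod.ext (by omega) (by omega))
    · rintro (rfl | ⟨hes, hc, h⟩)
      · exact ⟨⟨hm, hM⟩, ⟨hm, hM, by omega⟩, .inr hbounds⟩
      · exact ⟨hes, hc, .inl h⟩
  have hmM : (m, M) ∉ C := fun h => by
    have := (Finset.mem_filter.1 h).2.2 z₀ hz₀
    omega
  rw [hsides, Finset.card_insert_of_notMem hmM]
  exact card_consecutive_add_one hne

structure IsTriangulation (s : Finset ℕ) (T : Finset (ℕ × ℕ)) : Prop where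
  isDiagonal : ∀ e ∈ T, IsDiagonal s e
  noncrossing : ∀ e ∈ T, ∀ f ∈ T, ¬ Cross e f
  maximal : ∀ e, IsDiagonal s e → (∀ f ∈ T, ¬ Cross e f) → e ∈ T

def IsEdge (s : Finset ℕ) (T : Finset (ℕ × ℕ)) (e : ℕ × ℕ) : Prop := IsSide s e ∨ e ∈ T

lemma exists_isTriangulation_superset {F : Finset (ℕ × ℕ)} (hF : ∀ e ∈ F, IsDiagonal s e)
    (hnc : ∀ e ∈ F, ∀ f ∈ F, ¬ Cross e f) : ∃ T, F ⊆ T ∧ IsTriangulation s T := by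
  set D := (s ×ˢ s).filter (IsDiagonal s)
  have hD {e : ℕ × ℕ} (he : IsDiagonal s e) : e ∈ D :=
    Finset.mem_filter.2 ⟨Finset.mem_product.2 ⟨he.1.1, he.1.2.1⟩, he⟩
  set C := D.powerset.filter fun T => F ⊆ T ∧ ∀ e ∈ T, ∀ f ∈ T, ¬ Cross e f
  obtain ⟨T, hTC, hTmax⟩ := C.exists_max_image Finset.card
    ⟨F, Finset.mem_filter.2 ⟨Finset.mem_powerset.2 fun e he => hD (hF e he), subset_rfl, hnc⟩⟩
  obtain ⟨hTD, hFT, hTnc⟩ := (Finset.mem_filter.1 hTC).imp_left Finset.mem_powerset.1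
  refine ⟨T, hFT, fun e he => (Finset.mem_filter.1 (hTD he)).2, hTnc, fun e he hcomp => ?_⟩
  by_contra heT
  have hmem : insert e T ∈ C := by
    refine Finset.mem_filter.2 ⟨Finset.mem_powerset.2 (Finset.insert_subset (hD he) hTD),
      hFT.trans (Finset.subset_insert e T), fun a ha b hb => ?_⟩
    rw [Finset.mem_insert] at ha hb
    rcases ha with rfl | ha <;> rcases hb with rfl | hb
    · exact not_cross_self _
    · exact hcomp _ hb
    · exact fun h => hcomp _ ha (cross_comm.1 h)
    · exact hTnc _ ha _ hb
  have := hTmax _ hmem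
  rw [Finset.card_insert_of_notMem heT] at this
  omega

namespace IsTriangulation

variable {T : Finset (ℕ × ℕ)}

lemma isChord_of_isEdge (hT : IsTriangulation s T) {e : ℕ × ℕ} (he : IsEdge s T e) :
    IsChord s e :=
  he.elim (·.1) fun he => (hT.isDiagonal e he).1

lemma not_cross_of_isEdge (hT : IsTriangulation s T) {e f : ℕ × ℕ} (he : IsEdge s T e)
    (hf : f ∈ T) : ¬ Cross e f :=
  he.elim (·.not_cross (hT.isDiagonal f hf).1) (hT.noncrossing e · f hf)

lemma exists_cross_of_not_isEdge (hT : IsTriangulation s T) {e : ℕ × ℕ}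
    (hne : ¬ IsEdge s T e) (he : IsChord s e) : ∃ f ∈ T, Cross e f := by
  by_contra! h
  exact hne (he.isSide_or_isDiagonal.imp_right fun hd => hT.maximal e hd h)

lemma eq_of_lt_of_shortest (hT : IsTriangulation s T) {x y : ℕ} (hd : (x, y) ∈ T)
    (hmin : ∀ f ∈ T, y - x ≤ f.2 - f.1) {a b : ℕ} (ha : a ∈ s) (hb : b ∈ s) (hxa : x < a)
    (hay : a < y) (hxb : x < b) (hby : b < y) : a = b := by
  obtain ⟨⟨hx, hy, -⟩, -⟩ := hT.isDiagonal _ hd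
  by_contra hab
  wlog hlt : a < b generalizing a b
  · exact this hb ha hxb hby hxa hay (Ne.symm hab) (by omega)
  have hxb : (x, b) ∈ T := hT.maximal _ ⟨⟨hx, hb, hxb⟩, ⟨a, ha, hxa, hlt⟩, ⟨y, hy, .inr hby⟩⟩
    fun f hf => by
      have := hT.noncrossing f hf _ hd; have := hmin f hf; have := (hT.isDiagonal f hf).1.2.2
      unfold Cross at *; simp only at *; omega
  have := hmin _ hxb
  simp only at this
  omega

lemma erase_of_shortest (hT : IsTriangulation s T) {x y : ℕ} (hd : (x, y) ∈ T)
    (hmin : ∀ f ∈ T, y - x ≤ f.2 - f.1) {z : ℕ} (hz : z ∈ s) (hxz : x < z) (hzy : z < y) :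
    IsTriangulation (s.erase z) (T.erase (x, y)) := by
  obtain ⟨⟨hx, hy, -⟩, -⟩ := hT.isDiagonal _ hd
  have huniq (a : ℕ) (ha : a ∈ s) (hxa : x < a) (hay : a < y) : a = z :=
    hT.eq_of_lt_of_shortest hd hmin ha hz hxa hay hxz hzy
  have hfar (f) (hf : f ∈ T) : (f.1 ≤ x ∨ y ≤ f.1) ∧ (f.2 ≤ x ∨ y ≤ f.2) := by
    have := hT.noncrossing f hf _ hd; have := hmin f hf; have := (hT.isDiagonal f hf).1.2.2
    have := huniq f.1 (hT.isDiagonal f hf).1.1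
    have := huniq f.2 (hT.isDiagonal f hf).1.2.1
    unfold Cross at *; simp only at *; omega
  have hxz' : x ∈ s.erase z := Finset.mem_erase.2 ⟨by omega, hx⟩
  have hyz' : y ∈ s.erase z := Finset.mem_erase.2 ⟨by omega, hy⟩
  refine ⟨fun f hf => ?_, fun e he f hf => hT.noncrossing e (Finset.mem_of_mem_erase he) f
    (Finset.mem_of_mem_erase hf), fun e he hcomp => ?_⟩
  · obtain ⟨hfd, hfT⟩ := Finset.mem_erase.1 hf
    obtain ⟨⟨h1, h2, h12⟩, ⟨a, ha, ha1, ha2⟩, ⟨b, hb, hb'⟩⟩ := hT.isDiagonal f hfT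
    have := hfar f hfT
    have hfd' : f.1 = x → f.2 ≠ y := fun h1 h2 => hfd (Prod.ext h1 h2)
    refine ⟨⟨Finset.mem_erase.2 ⟨by omega, h1⟩, Finset.mem_erase.2 ⟨by omega, h2⟩, h12⟩, ?_, ?_⟩
    · by_cases haz : a = z
      · rcases (by omega : f.1 < x ∨ y < f.2) with h | h
        exacts [⟨x, hxz', h, by omega⟩, ⟨y, hyz', by omega, h⟩]
      · exact ⟨a, Finset.mem_erase.2 ⟨haz, ha⟩, ha1, ha2⟩
    · by_cases hbz : b = z
      · rcases (by omega : y ≤ f.1 ∨ f.2 ≤ x) with h | h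
        exacts [⟨x, hxz', .inl (by omega)⟩, ⟨y, hyz', .inr (by omega)⟩]
      · exact ⟨b, Finset.mem_erase.2 ⟨hbz, hb⟩, hb'⟩
  · obtain ⟨⟨h1, h2, h12⟩, ⟨a, ha, ha'⟩, ⟨b, hb, hb'⟩⟩ := he
    obtain ⟨h1z, h1⟩ := Finset.mem_erase.1 h1
    obtain ⟨h2z, h2⟩ := Finset.mem_erase.1 h2
    have heT : e ∈ T := hT.maximal e ⟨⟨h1, h2, h12⟩, ⟨a, Finset.mem_of_mem_erase ha, ha'⟩,
      ⟨b, Finset.mem_of_mem_erase hb, hb'⟩⟩ fun f hf => by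
        by_cases hfd : f = (x, y)
        · have := huniq _ h1; have := huniq _ h2
          subst hfd; unfold Cross; simp only; omega
        · exact hcomp f (Finset.mem_erase.2 ⟨hfd, hf⟩)
    refine Finset.mem_erase.2 ⟨?_, heT⟩
    rintro rfl
    obtain ⟨haz, ha⟩ := Finset.mem_erase.1 ha
    exact haz (huniq a ha ha'.1 ha'.2)

lemma card_add_three (hT : IsTriangulation s T) (hs : 3 ≤ s.card) : T.card + 3 = s.card := by
  induction hk : T.card generalizing s T with
  | zero =>
    obtain rfl := Finset.card_eq_zero.1 hk
    by_contra hne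
    set e := s.orderEmbOfFin rfl
    have hmem (i : Fin s.card) : e i ∈ s := Finset.orderEmbOfFin_mem s rfl i
    have hlt (i j : ℕ) (hij : i < j) (hj : j < s.card) : e ⟨i, hij.trans hj⟩ < e ⟨j, hj⟩ :=
      e.strictMono (Fin.mk_lt_mk.2 hij)
    refine Finset.notMem_empty _ (hT.maximal (e ⟨0, by omega⟩, e ⟨2, by omega⟩)
      ⟨⟨hmem _, hmem _, hlt 0 2 (by omega) _⟩, ⟨e ⟨1, by omega⟩, hmem _, hlt 0 1 (by omega) _,
        hlt 1 2 (by omega) _⟩, ⟨e ⟨3, by omega⟩, hmem _, .inr (hlt 2 3 (by omega) _)⟩⟩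
      (by simp))
  | succ k ih =>
    -- a shortest diagonal cuts off a single vertex
    obtain ⟨⟨x, y⟩, hd, hmin⟩ :=
      T.exists_min_image (fun e => e.2 - e.1) (Finset.card_pos.1 (by omega))
    obtain ⟨⟨hx, hy, hxy⟩, ⟨z, hz, hxz, hzy⟩, ⟨w, hw, hwxy⟩⟩ := hT.isDiagonal _ hd
    have hs' : 3 ≤ (s.erase z).card := Finset.two_lt_card.2
      ⟨x, Finset.mem_erase.2 ⟨by omega, hx⟩, y, Finset.mem_erase.2 ⟨by omega, hy⟩,
        w, Finset.mem_erase.2 ⟨by omega, hw⟩, by omega, by omega, by omega⟩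
    have := ih (hT.erase_of_shortest hd hmin hz hxz hzy) hs'
      (by rw [Finset.card_erase_of_mem hd, hk]; rfl)
    rw [Finset.card_erase_of_mem hz] at this
    omega

lemma exists_apex_between (hT : IsTriangulation s T) {x y : ℕ} (hxy : IsEdge s T (x, y))
    (hin : ∃ z ∈ s, x < z ∧ z < y) :
    ∃ z ∈ s, x < z ∧ z < y ∧ IsEdge s T (x, z) ∧ IsEdge s T (z, y) := by
  obtain ⟨hx, hy, -⟩ := hT.isChord_of_isEdge hxy
  set W := s.filter fun z => x < z ∧ z < y ∧ IsEdge s T (x, z)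
  have hW : W.Nonempty := by
    obtain ⟨z, hz, hxz, hzy⟩ := hin
    obtain ⟨m, hm, hxm, hmin⟩ := exists_least_gt ⟨z, hz, hxz⟩
    exact ⟨m, Finset.mem_filter.2 ⟨hm, hxm, (hmin z hz hxz).trans_lt hzy,
      .inl (isSide_of_least_gt hx hm hxm hmin)⟩⟩
  obtain ⟨v, hvW, hvmax⟩ := W.exists_max_image id hW
  obtain ⟨hv, hxv, hvy, hxvE⟩ := Finset.mem_filter.1 hvW
  refine ⟨v, hv, hxv, hvy, hxvE, ?_⟩
  by_contra hvyE
  obtain ⟨f, hfT, hcross⟩ := hT.exists_cross_of_not_isEdge hvyE ⟨hv, hy, hvy⟩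
  obtain ⟨-, hf2, hf⟩ := (hT.isDiagonal f hfT).1
  have h1 := hT.not_cross_of_isEdge hxy hfT
  have h2 := hT.not_cross_of_isEdge hxvE hfT
  have h3 : f.1 = x → f.2 < y → f.2 ≤ v := fun hfx hfy =>
    hvmax f.2 (Finset.mem_filter.2 ⟨hf2, hfx ▸ hf, hfy, .inr (by rw [← hfx]; exact hfT)⟩)
  unfold Cross at *
  simp only at *
  omega

lemma exists_apex_outside (hT : IsTriangulation s T) {x y : ℕ} (hd : (x, y) ∈ T) :
    ∃ w ∈ s, w < x ∧ IsEdge s T (w, x) ∧ IsEdge s T (w, y) ∨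
      y < w ∧ IsEdge s T (x, w) ∧ IsEdge s T (y, w) := by
  obtain ⟨⟨hx, hy, hxy⟩, -, ⟨w₀, hw₀, hw₀'⟩⟩ := hT.isDiagonal _ hd
  have hd' {f : ℕ × ℕ} (hf : f ∈ T) : ¬ Cross (x, y) f := hT.not_cross_of_isEdge (.inr hd) hf
  set L := s.filter fun w => w < x ∧ IsEdge s T (w, y)
  by_cases hL : L.Nonempty
  · obtain ⟨w, hwL, hwmax⟩ := L.exists_max_image id hL
    obtain ⟨hw, hwx, hwyE⟩ := Finset.mem_filter.1 hwL
    refine ⟨w, hw, .inl ⟨hwx, ?_, hwyE⟩⟩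
    by_contra hwxE
    obtain ⟨f, hfT, hcross⟩ := hT.exists_cross_of_not_isEdge hwxE ⟨hw, hx, hwx⟩
    obtain ⟨hf1, -, hf⟩ := (hT.isDiagonal f hfT).1
    have h1 := hd' hfT
    have h2 := hT.not_cross_of_isEdge hwyE hfT
    have h3 : f.2 = y → f.1 < x → f.1 ≤ w := fun hfy hfx =>
      hwmax f.1 (Finset.mem_filter.2 ⟨hf1, hfx, .inr (by rw [← hfy]; exact hfT)⟩)
    unfold Cross at *
    simp only at *
    omega
  have hL' (w : ℕ) (hw : w ∈ s) (hwx : w < x) : ¬ IsEdge s T (w, y) := fun hwy =>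
    hL ⟨w, Finset.mem_filter.2 ⟨hw, hwx, hwy⟩⟩
  set H := s.filter fun w => y < w ∧ IsEdge s T (y, w)
  have hH : H.Nonempty := by
    by_cases hup : ∃ z ∈ s, y < z
    · obtain ⟨m, hm, hym, hmin⟩ := exists_least_gt hup
      exact ⟨m, Finset.mem_filter.2 ⟨hm, hym, .inl (isSide_of_least_gt hy hm hym hmin)⟩⟩
    · push Not at hup
      obtain ⟨a, ha, hamin⟩ := s.exists_min_image id ⟨w₀, hw₀⟩
      have := hup w₀ hw₀
      have := hamin w₀ hw₀
      exact absurd (.inl ⟨⟨ha, hy, by simp only [id] at *; omega⟩, .inr fun z hz =>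
        ⟨hamin z hz, hup z hz⟩⟩) (hL' a ha (by simp only [id] at *; omega))
  obtain ⟨w, hwH, hwmax⟩ := H.exists_max_image id hH
  obtain ⟨hw, hyw, hywE⟩ := Finset.mem_filter.1 hwH
  refine ⟨w, hw, .inr ⟨hyw, ?_, hywE⟩⟩
  by_contra hxwE
  obtain ⟨f, hfT, hcross⟩ := hT.exists_cross_of_not_isEdge hxwE ⟨hx, hw, hxy.trans hyw⟩
  obtain ⟨hf1, hf2, hf⟩ := (hT.isDiagonal f hfT).1
  have h1 := hd' hfT
  have h2 := hT.not_cross_of_isEdge hywE hfT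
  have h3 : f.1 = y → f.2 ≤ w := fun hfy =>
    hwmax f.2 (Finset.mem_filter.2 ⟨hf2, hfy ▸ hf, .inr (by rw [← hfy]; exact hfT)⟩)
  have h4 : f.2 = y → ¬ f.1 < x := fun hfy hfx =>
    hL' f.1 hf1 hfx (.inr (by rw [← hfy]; exact hfT))
  unfold Cross at *
  simp only at *
  omega

lemma exists_flip (hT : IsTriangulation s T) {d : ℕ × ℕ} (hd : d ∈ T) :
    ∃ d', IsDiagonal s d' ∧ Cross d d' ∧ ∀ f ∈ T, f ≠ d → ¬ Cross d' f := by
  obtain ⟨x, y⟩ := d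
  obtain ⟨⟨hx, hy, hxy⟩, hin, -⟩ := hT.isDiagonal _ hd
  obtain ⟨z, hz, hxz, hzy, hxzE, hzyE⟩ := hT.exists_apex_between (.inr hd) hin
  have hquad {f : ℕ × ℕ} (hf : f ∈ T) (hfd : f ≠ (x, y)) {a b c e : ℕ}
      (h1 : IsEdge s T (a, b)) (h2 : IsEdge s T (b, c)) (h3 : IsEdge s T (c, e))
      (h4 : IsEdge s T (a, e)) : ¬ Cross (a, b) f ∧ ¬ Cross (b, c) f ∧ ¬ Cross (c, e) f ∧
        ¬ Cross (a, e) f ∧ ¬ Cross (x, y) f ∧ f.1 < f.2 ∧ (f.1 = x → f.2 ≠ y) :=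
    ⟨hT.not_cross_of_isEdge h1 hf, hT.not_cross_of_isEdge h2 hf, hT.not_cross_of_isEdge h3 hf,
      hT.not_cross_of_isEdge h4 hf, hT.not_cross_of_isEdge (.inr hd) hf,
      (hT.isDiagonal f hf).1.2.2, fun h1 h2 => hfd (Prod.ext h1 h2)⟩
  obtain ⟨w, hw, ⟨hwx, hwxE, hwyE⟩ | ⟨hyw, hxwE, hywE⟩⟩ := hT.exists_apex_outside hd
  · refine ⟨(w, z), ⟨⟨hw, hz, hwx.trans hxz⟩, ⟨x, hx, hwx, hxz⟩, ⟨y, hy, .inr hzy⟩⟩,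
      by unfold Cross; omega, fun f hf hfd => ?_⟩
    have := hquad hf hfd hwxE hxzE hzyE hwyE
    unfold Cross at *
    omega
  · refine ⟨(z, w), ⟨⟨hz, hw, hzy.trans hyw⟩, ⟨y, hy, hzy, hyw⟩, ⟨x, hx, .inl hxz⟩⟩,
      by unfold Cross; omega, fun f hf hfd => ?_⟩
    have := hquad hf hfd hxzE hzyE hywE hxwE
    unfold Cross at *
    omega

end IsTriangulation

def IsNoncrossingColoring {k : ℕ} (E : Finset (ℕ × ℕ)) (c : ℕ × ℕ → Fin k) : Prop :=
  ∀ e ∈ E, ∀ f ∈ E, c e = c f → ¬ Cross e f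

def IsSaturated (k : ℕ) (s : Finset ℕ) (E : Finset (ℕ × ℕ)) : Prop :=
  ∀ d, IsChord s d → d ∉ E → ∀ c : ℕ × ℕ → Fin k, ¬ IsNoncrossingColoring (insert d E) c

noncomputable def diagonalsOfColor {k : ℕ} (s : Finset ℕ) (E : Finset (ℕ × ℕ))
    (c : ℕ × ℕ → Fin k) (i : Fin k) : Finset (ℕ × ℕ) :=
  E.filter fun e => IsDiagonal s e ∧ c e = i

variable {E : Finset (ℕ × ℕ)} {k : ℕ}

namespace IsNoncrossingColoring

variable {c : ℕ × ℕ → Fin k}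

lemma update_insert (hc : IsNoncrossingColoring E c) {d : ℕ × ℕ} {i : Fin k}
    (hd : ∀ f ∈ E, c f = i → ¬ Cross d f) :
    IsNoncrossingColoring (insert d E) (Function.update c d i) := by
  have key {e f : ℕ × ℕ} (he : e = d) (hf : f ∈ insert d E) (hfd : f ≠ d)
      (hcol : Function.update c d i e = Function.update c d i f) : ¬ Cross e f := by
    subst he
    rw [Function.update_self, Function.update_of_ne hfd] at hcol
    exact hd f ((Finset.mem_insert.1 hf).resolve_left hfd) hcol.symm
  intro e he f hf hcol
  by_cases hed : e = d <;> by_cases hfd : f = d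
  · exact hed ▸ hfd ▸ not_cross_self d
  · exact key hed hf hfd hcol
  · exact fun h => key hfd he hed hcol.symm (cross_comm.1 h)
  · rw [Function.update_of_ne hed, Function.update_of_ne hfd] at hcol
    exact hc e ((Finset.mem_insert.1 he).resolve_left hed) f
      ((Finset.mem_insert.1 hf).resolve_left hfd) hcol

lemma diagonalsOfColor_noncrossing (hc : IsNoncrossingColoring E c) (i : Fin k) :
    ∀ e ∈ diagonalsOfColor s E c i, ∀ f ∈ diagonalsOfColor s E c i, ¬ Cross e f := by
  intro e he f hf
  obtain ⟨he, -, hei⟩ := Finset.mem_filter.1 he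
  obtain ⟨hf, -, hfi⟩ := Finset.mem_filter.1 hf
  exact hc e he f hf (hei.trans hfi.symm)

end IsNoncrossingColoring

lemma not_cross_of_forall_diagonalsOfColor (hE : ∀ e ∈ E, IsChord s e) {c : ℕ × ℕ → Fin k}
    {i : Fin k} {d : ℕ × ℕ} (hd : IsChord s d)
    (hdi : ∀ f ∈ diagonalsOfColor s E c i, ¬ Cross d f) : ∀ f ∈ E, c f = i → ¬ Cross d f :=
  fun f hf hfi => (hE f hf).isSide_or_isDiagonal.elim
    (fun h hdf => h.not_cross hd (cross_comm.1 hdf))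
    fun h => hdi f (Finset.mem_filter.2 ⟨hf, h, hfi⟩)

lemma exists_isNoncrossingColoring_forall_card_le
    (hcol : ∃ c : ℕ × ℕ → Fin k, IsNoncrossingColoring E c) (i : Fin k) :
    ∃ c : ℕ × ℕ → Fin k, IsNoncrossingColoring E c ∧ ∀ c' : ℕ × ℕ → Fin k,
      IsNoncrossingColoring E c' →
        (diagonalsOfColor s E c' i).card ≤ (diagonalsOfColor s E c i).card := by
  set S := (fun c : ℕ × ℕ → Fin k => (diagonalsOfColor s E c i).card) ''
    {c | IsNoncrossingColoring E c}
  have hbdd : BddAbove S := ⟨E.card, by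
    rintro _ ⟨c, -, rfl⟩
    exact Finset.card_filter_le _ _⟩
  obtain ⟨c₀, hc₀⟩ := hcol
  obtain ⟨c, hc, hcS⟩ := Nat.sSup_mem (s := S) ⟨_, c₀, hc₀, rfl⟩ hbdd
  refine ⟨c, hc, fun c' hc' => ?_⟩
  simp only at hcS
  exact hcS ▸ le_csSup hbdd ⟨c', hc', rfl⟩

namespace IsSaturated

lemma mem_of_isSide (hsat : IsSaturated k s E) (hE : ∀ e ∈ E, IsChord s e)
    {c : ℕ × ℕ → Fin k} (hc : IsNoncrossingColoring E c) {e : ℕ × ℕ} (he : IsSide s e) :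
    e ∈ E := by
  by_contra heE
  exact hsat e he.1 heE _ (hc.update_insert (i := c e) fun f hf _ => he.not_cross (hE f hf))

lemma isTriangulation_of_forall_card_le (hsat : IsSaturated k s E)
    (hE : ∀ e ∈ E, IsChord s e) {c : ℕ × ℕ → Fin k} (hc : IsNoncrossingColoring E c) {i : Fin k}
    (hmax : ∀ c' : ℕ × ℕ → Fin k, IsNoncrossingColoring E c' →
      (diagonalsOfColor s E c' i).card ≤ (diagonalsOfColor s E c i).card) :
    IsTriangulation s (diagonalsOfColor s E c i) := by
  refine ⟨fun e he => (Finset.mem_filter.1 he).2.1, hc.diagonalsOfColor_noncrossing i,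
    fun e he hcomp => ?_⟩
  by_contra heD
  have hc' := hc.update_insert (not_cross_of_forall_diagonalsOfColor hE he.1 hcomp)
  by_cases heE : e ∈ E
  swap
  · exact hsat e he.1 heE _ hc'
  rw [Finset.insert_eq_of_mem heE] at hc'
  have hsub : insert e (diagonalsOfColor s E c i) ⊆
      diagonalsOfColor s E (Function.update c e i) i := by
    intro f hf
    rcases Finset.mem_insert.1 hf with rfl | hf
    · exact Finset.mem_filter.2 ⟨heE, he, Function.update_self ..⟩
    · obtain ⟨hfE, hfd, hfi⟩ := Finset.mem_filter.1 hf
      have hfe : f ≠ e := fun h => heD (h ▸ hf)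
      exact Finset.mem_filter.2 ⟨hfE, hfd, by rw [Function.update_of_ne hfe, hfi]⟩
  have := (Finset.card_le_card hsub).trans (hmax _ hc')
  rw [Finset.card_insert_of_notMem heD] at this
  omega

lemma isTriangulation_one_of_isTriangulation_zero (hsat : IsSaturated 2 s E)
    (hE : ∀ e ∈ E, IsChord s e) {c : ℕ × ℕ → Fin 2} (hc : IsNoncrossingColoring E c)
    (hT₀ : IsTriangulation s (diagonalsOfColor s E c 0)) :
    IsTriangulation s (diagonalsOfColor s E c 1) := by
  obtain ⟨T, hsub, hT⟩ := exists_isTriangulation_superset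
    (fun e he => (Finset.mem_filter.1 he).2.1) (hc.diagonalsOfColor_noncrossing 1)
  suffices hTsub : T ⊆ diagonalsOfColor s E c 1 by rwa [hsub.antisymm hTsub]
  intro e heT
  by_contra heD
  have he := hT.isDiagonal e heT
  have hcomp (f) (hf : f ∈ diagonalsOfColor s E c 1) : ¬ Cross e f :=
    hT.noncrossing e heT f (hsub hf)
  have hc₁ := hc.update_insert (not_cross_of_forall_diagonalsOfColor hE he.1 hcomp)
  by_cases heE : e ∈ E
  swap
  · exact hsat e he.1 heE _ hc₁
  rw [Finset.insert_eq_of_mem heE] at hc₁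
  have he₀ : e ∈ diagonalsOfColor s E c 0 := Finset.mem_filter.2 ⟨heE, he, by
    by_contra h
    exact heD (Finset.mem_filter.2 ⟨heE, he, by omega⟩)⟩
  obtain ⟨e', he', hcross, hfree⟩ := hT₀.exists_flip he₀
  have hc₂ := hc₁.update_insert (i := 0) (not_cross_of_forall_diagonalsOfColor hE he'.1
    fun f hf => by
      obtain ⟨hfE, hfd, hf0⟩ := Finset.mem_filter.1 hf
      have hfe : f ≠ e := by rintro rfl; simp at hf0
      rw [Function.update_of_ne hfe] at hf0
      exact hfree f (Finset.mem_filter.2 ⟨hfE, hfd, hf0⟩) hfe)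
  have he'E : e' ∉ E := by
    intro he'E
    rcases (by omega : c e' = 0 ∨ c e' = 1) with h | h
    · exact hT₀.noncrossing e he₀ e' (Finset.mem_filter.2 ⟨he'E, he', h⟩) hcross
    · exact hcomp e' (Finset.mem_filter.2 ⟨he'E, he', h⟩) hcross
  exact hsat e' he'.1 he'E _ hc₂

theorem card_add_six (hsat : IsSaturated 2 s E) (hs : 3 ≤ s.card) (hE : ∀ e ∈ E, IsChord s e)
    (hcol : ∃ c : ℕ × ℕ → Fin 2, IsNoncrossingColoring E c) : E.card + 6 = 3 * s.card := by
  obtain ⟨c, hc, hmax⟩ := exists_isNoncrossingColoring_forall_card_le (s := s) hcol 0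
  have hT₀ := hsat.isTriangulation_of_forall_card_le hE hc hmax
  have hT₁ := hsat.isTriangulation_one_of_isTriangulation_zero hE hc hT₀
  have hsides : E.filter (IsSide s) = (s ×ˢ s).filter (IsSide s) := by
    ext e
    simp only [Finset.mem_filter, Finset.mem_product]
    exact ⟨fun h => ⟨⟨h.2.1.1, h.2.1.2.1⟩, h.2⟩, fun h => ⟨hsat.mem_of_isSide hE hc h.2, h.2⟩⟩
  have hdiag (i : Fin 2) : (E.filter fun e => ¬ IsSide s e).filter (c · = i) =
      diagonalsOfColor s E c i := by
    ext e
    simp only [diagonalsOfColor, Finset.mem_filter]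
    exact ⟨fun h => ⟨h.1.1, (hE e h.1.1).isSide_or_isDiagonal.resolve_left h.1.2, h.2⟩,
      fun h => ⟨⟨h.1, fun hs => hs.not_isDiagonal h.2.1⟩, h.2.2⟩⟩
  have hcolors : (E.filter fun e => ¬ IsSide s e).filter (fun e => ¬ c e = 0) =
      (E.filter fun e => ¬ IsSide s e).filter (c · = 1) :=
    Finset.filter_congr fun e _ => by omega
  have h1 := Finset.card_filter_add_card_filter_not (s := E) (IsSide s)
  have h2 := Finset.card_filter_add_card_filter_not (s := E.filter fun e => ¬ IsSide s e)
    (c · = 0)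
  rw [hcolors, hdiag, hdiag] at h2
  rw [hsides, card_sides hs] at h1
  have := hT₀.card_add_three hs
  have := hT₁.card_add_three hs
  omega

end IsSaturated

end Polygon

open Polygon

lemma edgeCross_mk_iff {V : Type} {p : V → Pt} {u v a b : V} :
    EdgeCross p s(u, v) s(a, b) ↔ SegCross (p u) (p v) (p a) (p b) := by
  refine ⟨fun ⟨u', v', a', b', he, hf, h⟩ => ?_, fun h => ⟨u, v, a, b, rfl, rfl, h⟩⟩
  rw [Sym2.eq_iff] at he hf
  rcases he with ⟨rfl, rfl⟩ | ⟨rfl, rfl⟩ <;> rcases hf with ⟨rfl, rfl⟩ | ⟨rfl, rfl⟩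
  exacts [h, segCross_comm_right.1 h, segCross_comm_left.1 h,
    segCross_comm_left.1 (segCross_comm_right.1 h)]

def chordOf {V : Type} (ord : V → ℕ) : Sym2 V → ℕ × ℕ :=
  Sym2.lift ⟨fun u v => (min (ord u) (ord v), max (ord u) (ord v)),
    fun u v => by simp only [min_comm, max_comm]⟩

section chordOf

variable {V : Type} {ord : V → ℕ}

lemma chordOf_mk (u v : V) :
    chordOf ord s(u, v) = (min (ord u) (ord v), max (ord u) (ord v)) :=
  rfl

lemma chordOf_mk_of_lt {u v : V} (h : ord u < ord v) : chordOf ord s(u, v) = (ord u, ord v) := by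
  rw [chordOf_mk, min_eq_left h.le, max_eq_right h.le]

lemma chordOf_injective (hinj : Function.Injective ord) : Function.Injective (chordOf ord) := by
  intro e f h
  induction e using Sym2.ind with | _ u v => ?_
  induction f using Sym2.ind with | _ a b => ?_
  simp only [chordOf_mk, Prod.mk.injEq] at h
  rcases (by omega : ord u = ord a ∧ ord v = ord b ∨ ord u = ord b ∧ ord v = ord a) with h | h
  · rw [hinj h.1, hinj h.2]
  · rw [hinj h.1, hinj h.2, Sym2.eq_swap]

lemma exists_eq_mk_lt (hinj : Function.Injective ord) {e : Sym2 V} (he : ¬ e.IsDiag) :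
    ∃ u v, e = s(u, v) ∧ ord u < ord v := by
  induction e using Sym2.ind with | _ u v => ?_
  have huv : ord u ≠ ord v := fun h => he (Sym2.mk_isDiag_iff.2 (hinj h))
  rcases huv.lt_or_gt with h | h
  exacts [⟨u, v, rfl, h⟩, ⟨v, u, Sym2.eq_swap, h⟩]

lemma isChord_of_mem_image_edgeFinset [Fintype V] (hinj : Function.Injective ord)
    {H : SimpleGraph V} :
    ∀ d ∈ H.edgeFinset.image (chordOf ord), IsChord (Finset.univ.image ord) d := by
  intro d hd
  obtain ⟨e, he, rfl⟩ := Finset.mem_image.1 hd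
  obtain ⟨u, v, rfl, huv⟩ := exists_eq_mk_lt hinj
    (H.not_isDiag_of_mem_edgeSet (SimpleGraph.mem_edgeFinset.1 he))
  rw [chordOf_mk_of_lt huv]
  exact ⟨Finset.mem_image_of_mem _ (Finset.mem_univ u),
    Finset.mem_image_of_mem _ (Finset.mem_univ v), huv⟩

end chordOf

namespace IsCCWOrder

variable {V : Type} {p : V → Pt} {ord : V → ℕ}

lemma det2_pos_iff (h : IsCCWOrder p ord) (i j k : V) :
    0 < det2 (p i) (p j) (p k) ↔ ord i < ord j ∧ ord j < ord k ∨
      ord j < ord k ∧ ord k < ord i ∨ ord k < ord i ∧ ord i < ord j := by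
  have hcyc {i j k : V} (hijk : ord i < ord j ∧ ord j < ord k ∨
      ord j < ord k ∧ ord k < ord i ∨ ord k < ord i ∧ ord i < ord j) :
      0 < det2 (p i) (p j) (p k) := by
    rcases hijk with hijk | hijk | hijk
    · exact h.det2_pos i j k hijk.1 hijk.2
    · rw [det2_rotate]; exact h.det2_pos j k i hijk.1 hijk.2
    · rw [← det2_rotate]; exact h.det2_pos k i j hijk.1 hijk.2
  refine ⟨fun hpos => ?_, hcyc⟩
  by_contra hn
  rcases (by omega : ord i = ord j ∨ ord j = ord k ∨ ord i = ord k ∨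
      ord i < ord k ∧ ord k < ord j ∨ ord k < ord j ∧ ord j < ord i ∨
      ord j < ord i ∧ ord i < ord k) with hij | hjk | hik | hikj
  · rw [h.injective hij] at hpos; unfold det2 at hpos; linarith
  · rw [h.injective hjk] at hpos; unfold det2 at hpos; linarith
  · rw [h.injective hik] at hpos; unfold det2 at hpos; linarith
  · linarith [hcyc hikj, det2_swap (p i) (p j) (p k)]

lemma det2_neg_iff (h : IsCCWOrder p ord) (i j k : V) :
    det2 (p i) (p j) (p k) < 0 ↔ ord i < ord k ∧ ord k < ord j ∨
      ord k < ord j ∧ ord j < ord i ∨ ord j < ord i ∧ ord i < ord k := by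
  rw [← neg_pos, ← det2_swap, h.det2_pos_iff]

lemma segCross_iff_cross (h : IsCCWOrder p ord) {u v a b : V} (huv : ord u < ord v)
    (hab : ord a < ord b) (hne : ¬ (u = a ∧ v = b)) :
    SegCross (p u) (p v) (p a) (p b) ↔ Cross (ord u, ord v) (ord a, ord b) := by
  have hne' : ¬ (ord u = ord a ∧ ord v = ord b) :=
    fun ⟨h1, h2⟩ => hne ⟨h.injective h1, h.injective h2⟩
  have hpos := h.det2_pos_iff
  have hneg := h.det2_neg_iff
  rw [segCross_iff_det2_mul_neg (by simp only [ne_iff_lt_or_gt, hpos, hneg]; omega)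
    (by simp only [ne_iff_lt_or_gt, hpos, hneg]; omega), mul_neg_iff, mul_neg_iff]
  simp only [hpos, hneg, Cross]
  omega

lemma edgeCross_iff_cross (h : IsCCWOrder p ord) {e f : Sym2 V} (he : ¬ e.IsDiag)
    (hf : ¬ f.IsDiag) (hef : e ≠ f) :
    EdgeCross p e f ↔ Cross (chordOf ord e) (chordOf ord f) := by
  obtain ⟨u, v, rfl, huv⟩ := exists_eq_mk_lt h.injective he
  obtain ⟨a, b, rfl, hab⟩ := exists_eq_mk_lt h.injective hf
  rw [edgeCross_mk_iff, chordOf_mk_of_lt huv, chordOf_mk_of_lt hab]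
  exact h.segCross_iff_cross huv hab fun ⟨h1, h2⟩ => hef (h1 ▸ h2 ▸ rfl)

variable [Fintype V]

lemma crossingFree_comp_iff (h : IsCCWOrder p ord) (H : SimpleGraph V) {k : ℕ}
    (c : ℕ × ℕ → Fin k) :
    CrossingFree H p (c ∘ chordOf ord) ↔
      IsNoncrossingColoring (H.edgeFinset.image (chordOf ord)) c := by
  have key {e f : Sym2 V} (he : e ∈ H.edgeSet) (hf : f ∈ H.edgeSet) (hef : e ≠ f) :=
    h.edgeCross_iff_cross (H.not_isDiag_of_mem_edgeSet he) (H.not_isDiag_of_mem_edgeSet hf) hef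
  constructor
  · intro hcf d hd d' hd' hcol
    obtain ⟨e, he, rfl⟩ := Finset.mem_image.1 hd
    obtain ⟨f, hf, rfl⟩ := Finset.mem_image.1 hd'
    rw [SimpleGraph.mem_edgeFinset] at he hf
    by_cases hef : e = f
    · exact hef ▸ not_cross_self _
    · exact (key he hf hef).not.1 (hcf e he f hf hef hcol)
  · intro hc e he f hf hef hcol
    exact (key he hf hef).not.2 (hc _ (Finset.mem_image_of_mem _
      (SimpleGraph.mem_edgeFinset.2 he)) _ (Finset.mem_image_of_mem _
      (SimpleGraph.mem_edgeFinset.2 hf)) hcol)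

lemma exists_isNoncrossingColoring (h : IsCCWOrder p ord) {G : SimpleGraph V} {k : ℕ}
    [NeZero k] (hθ : ∃ φ : Sym2 V → Fin k, CrossingFree G p φ) :
    ∃ c : ℕ × ℕ → Fin k, IsNoncrossingColoring (G.edgeFinset.image (chordOf ord)) c := by
  obtain ⟨φ, hφ⟩ := hθ
  refine ⟨Function.extend (chordOf ord) φ 0, (h.crossingFree_comp_iff G _).1 ?_⟩
  rwa [Function.extend_comp (chordOf_injective h.injective)]

lemma isSaturated (h : IsCCWOrder p ord) {G : SimpleGraph V} {k : ℕ} (hsat : Saturated k G p) :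
    IsSaturated k (Finset.univ.image ord) (G.edgeFinset.image (chordOf ord)) := by
  rintro ⟨a, b⟩ ⟨ha, hb, hab⟩ hdE c hc
  obtain ⟨u, -, rfl⟩ := Finset.mem_image.1 ha
  obtain ⟨v, -, rfl⟩ := Finset.mem_image.1 hb
  have hd : chordOf ord s(u, v) = (ord u, ord v) := chordOf_mk_of_lt hab
  have huv : u ≠ v := fun huv => hab.ne (congrArg ord huv)
  refine hsat u v huv (fun hadj => hdE (Finset.mem_image.2
    ⟨s(u, v), SimpleGraph.mem_edgeFinset.2 hadj, hd⟩)) (c ∘ chordOf ord)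
    ((h.crossingFree_comp_iff _ c).2 ?_)
  convert hc using 1
  ext e
  simp only [Finset.mem_image, SimpleGraph.mem_edgeFinset, SimpleGraph.edgeSet_sup,
    SimpleGraph.edgeSet_fromEdgeSet, Finset.mem_insert, Set.mem_union, Set.mem_sdiff,
    Set.mem_singleton_iff, Sym2.mem_diagSet]
  constructor
  · rintro ⟨e, he | ⟨rfl, -⟩, rfl⟩
    exacts [.inr ⟨e, he, rfl⟩, .inl hd]
  · rintro (rfl | ⟨e, he, rfl⟩)
    exacts [⟨s(u, v), .inr ⟨rfl, Sym2.mk_isDiag_iff.not.2 huv⟩, hd⟩, ⟨e, .inl he, rfl⟩]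

end IsCCWOrder

/-- Every saturated convex Θ^2-drawing of a graph on `n ≥ 3`
vertices has exactly `3n - 6` edges. -/
theorem stmt5 (n : ℕ) (hn : 3 ≤ n)
    (G : SimpleGraph (Fin n)) (p : Fin n → Pt)
    (hgen : GenPos p) (hconv : ConvexPos p)
    (hθ : ∃ φ : Sym2 (Fin n) → Fin 2, CrossingFree G p φ)
    (hsat : Saturated 2 G p) :
    (G.edgeSet.ncard : ℤ) = 3 * (n : ℤ) - 6 := by
  obtain ⟨ord, hord⟩ := exists_isCCWOrder hgen hconv
  have hs : (Finset.univ.image ord).card = n := by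
    rw [Finset.card_image_of_injective _ hord.injective, Finset.card_univ, Fintype.card_fin]
  have hcard := (hord.isSaturated hsat).card_add_six (by omega)
    (isChord_of_mem_image_edgeFinset hord.injective) (hord.exists_isNoncrossingColoring hθ)
  rw [Finset.card_image_of_injective _ (chordOf_injective hord.injective), hs] at hcard
  rw [← SimpleGraph.coe_edgeFinset, Set.ncard_coe_finset]
  omega
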